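/- Characterization of local progress for semialgebraic sets (LP): Let f be a polynomial vector field on ℝⁿ. Let P ⊆ ℝⁿ be given in normal form: there are finitely many polynomials p_{ij} (0 ≤ i ≤ M, 0 ≤ j ≤ m(i)) and q_{ij} (0 ≤ i ≤ M, 0 ≤ j ≤ n(i)) such that P = { x ∈ ℝⁿ : there exists i ≤ M with p_{ij}(x) ≥ 0 for all j ≤ m(i) and q_{ij}(x) > 0 for all j ≤ n(i) }. Fix for each of these polynomials a rank with respect to f. Then for every ω ∈ ℝⁿ the following are equivalent: (a) there exist T > 0 and a solution φ : [0,T] → ℝⁿ of x' = f(x) with φ(0) = ω and φ(t) ∈ P for all t ∈ (0,T]; (b) there exists i ≤ M such that Prog≥_f(p_{ij})(ω) holds for all j ≤ m(i) and Prog>_f(q_{ij})(ω) holds for all j ≤ n(i). -/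

import Mathlib

open MvPolynomial Set

/-- Lie derivative of polynomial `p` along the polynomial vector field `f`. -/
noncomputable def lieD {n : ℕ} (f : Fin n → MvPolynomial (Fin n) ℝ)
    (p : MvPolynomial (Fin n) ℝ) : MvPolynomial (Fin n) ℝ :=
  ∑ i, pderiv i p * f i

/-- `φ` is a solution of `x' = f(x)` on `[0,T]`. -/
def IsSol {n : ℕ} (f : Fin n → MvPolynomial (Fin n) ℝ) (T : ℝ)
    (φ : ℝ → (Fin n → ℝ)) : Prop :=
  ∀ t ∈ Icc (0 : ℝ) T, HasDerivWithinAt φ (fun i => eval (φ t) (f i)) (Icc (0 : ℝ) T) t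


/-- `N` is a rank of `p` with respect to `f`. -/
def IsRank {n : ℕ} (f : Fin n → MvPolynomial (Fin n) ℝ)
    (p : MvPolynomial (Fin n) ℝ) (N : ℕ) : Prop :=
  1 ≤ N ∧ ∃ g : ℕ → MvPolynomial (Fin n) ℝ,
    (lieD f)^[N] p = ∑ i ∈ Finset.range N, g i * (lieD f)^[i] p

/-- Strict progress predicate: the first significant Lie derivative is positive. -/
def ProgGt {n : ℕ} (f : Fin n → MvPolynomial (Fin n) ℝ)
    (p : MvPolynomial (Fin n) ℝ) (N : ℕ) (ω : Fin n → ℝ) : Prop :=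
  ∃ k < N, (∀ j < k, eval ω ((lieD f)^[j] p) = 0) ∧ 0 < eval ω ((lieD f)^[k] p)

/-- Weak progress predicate. -/
def ProgGe {n : ℕ} (f : Fin n → MvPolynomial (Fin n) ℝ)
    (p : MvPolynomial (Fin n) ℝ) (N : ℕ) (ω : Fin n → ℝ) : Prop :=
  ProgGt f p N ω ∨ ∀ i < N, eval ω ((lieD f)^[i] p) = 0


/-!
Along a solution `φ`, the derivatives of `t ↦ p (φ t)` are the Lie derivatives `L_f^j p`
evaluated along `φ`. If the first of them not vanishing at `φ 0` is the `k`-th, integrating `k`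
times shows that `p (φ t)` has its sign for all small `t > 0`. If the first `N` of them vanish,
where `N` is a rank of `p`, the rank relation is a linear ODE with bounded coefficients for the
vector `(L_f^j p (φ t))_{j < N}`, so Grönwall's inequality keeps it zero. Hence every atom of `P`
has an eventually constant sign along `φ`, read off from the progress predicates at `φ 0`, and a
finite disjunction of finite conjunctions of such atoms holds eventually iff one disjunct does.
Polynomial vector fields are smooth, so solutions exist.
-/

open Filter Topology

lemma eventually_pos_of_hasDerivWithinAt_succ {T : ℝ} (hT : 0 < T) {k : ℕ} {Y : ℕ → ℝ → ℝ}
    (hY : ∀ j, ∀ t ∈ Icc 0 T, HasDerivWithinAt (Y j) (Y (j + 1) t) (Icc 0 T) t)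
    (hzero : ∀ j < k, Y j 0 = 0) (hpos : 0 < Y k 0) : ∀ᶠ t in 𝓝[>] 0, 0 < Y 0 t := by
  induction k generalizing Y with
  | zero =>
    have hcont := (hY 0 0 ⟨le_rfl, hT.le⟩).continuousWithinAt
    rw [ContinuousWithinAt, nhdsWithin_Icc_eq_nhdsGE hT] at hcont
    exact nhdsWithin_mono _ Ioi_subset_Ici_self (hcont.eventually (lt_mem_nhds hpos))
  | succ k ih =>
    obtain ⟨δ, hδ, hderiv_pos⟩ := mem_nhdsGT_iff_exists_Ioc_subset.1 <|
      ih (fun j => hY (j + 1)) (fun j hj => hzero (j + 1) (by omega)) hpos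
    have hδT : Icc 0 (min δ T) ⊆ Icc 0 T := Icc_subset_Icc_right (min_le_right _ _)
    have hmono : StrictMonoOn (Y 0) (Icc 0 (min δ T)) := by
      refine strictMonoOn_of_hasDerivWithinAt_pos (f' := Y 1) (convex_Icc _ _)
        (fun t ht => (hY 0 t (hδT ht)).continuousWithinAt.mono hδT) (fun t ht => ?_) fun t ht => ?_
      · exact (hY 0 t (hδT (interior_subset ht))).mono (interior_subset.trans hδT)
      · rw [interior_Icc] at ht
        exact hderiv_pos ⟨ht.1, ht.2.le.trans (min_le_left _ _)⟩
    filter_upwards [Ioc_mem_nhdsGT (lt_min hδ hT)] with t ht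
    simpa [hzero 0 k.succ_pos] using
      hmono (left_mem_Icc.2 (lt_min hδ hT).le) (Ioc_subset_Icc_self ht) ht.1

lemma pi_norm_shift_le_of_eq_sum {N : ℕ} {a c : ℕ → ℝ}
    (ha : a N = ∑ i ∈ Finset.range N, c i * a i) :
    ‖fun j : Fin N => a (j + 1)‖ ≤
      max 1 (∑ i ∈ Finset.range N, |c i|) * ‖fun j : Fin N => a j‖ := by
  set A := ‖fun j : Fin N => a j‖
  have hA : ∀ i < N, |a i| ≤ A := fun i hi => norm_le_pi_norm (fun j : Fin N => a j) ⟨i, hi⟩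
  refine (pi_norm_le_iff_of_nonneg (by positivity)).2 fun j => ?_
  rcases (Nat.succ_le_of_lt j.2).lt_or_eq with hj | hj
  · exact (hA _ hj).trans (le_mul_of_one_le_left (norm_nonneg _) (le_max_left _ _))
  · calc ‖a (j + 1)‖ = |∑ i ∈ Finset.range N, c i * a i| := by
          rw [Real.norm_eq_abs, ← ha]; exact congrArg (fun i => |a i|) hj
      _ ≤ ∑ i ∈ Finset.range N, |c i| * A := by
        refine (Finset.abs_sum_le_sum_abs _ _).trans (Finset.sum_le_sum fun i hi => ?_)
        rw [abs_mul]
        exact mul_le_mul_of_nonneg_left (hA i (Finset.mem_range.1 hi)) (abs_nonneg _)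
      _ ≤ max 1 (∑ i ∈ Finset.range N, |c i|) * A := by
        rw [← Finset.sum_mul]
        exact mul_le_mul_of_nonneg_right (le_max_right _ _) (norm_nonneg _)

variable {n : ℕ} {f : Fin n → MvPolynomial (Fin n) ℝ}

lemma HasDerivWithinAt.eval_mvPolynomial {s : Set ℝ} {t : ℝ} {φ : ℝ → Fin n → ℝ} {φ' : Fin n → ℝ}
    (hφ : HasDerivWithinAt φ φ' s t) (r : MvPolynomial (Fin n) ℝ) :
    HasDerivWithinAt (fun u => eval (φ u) r) (∑ i, eval (φ t) (pderiv i r) * φ' i) s t := by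
  induction r using MvPolynomial.induction_on with
  | C a => simpa using hasDerivWithinAt_const t s a
  | add p q hp hq =>
    simp only [map_add]
    refine (hp.add hq).congr_deriv ?_
    simp [add_mul, Finset.sum_add_distrib]
  | mul_X p i hp =>
    simp only [map_mul, eval_X]
    refine (hp.mul (hasDerivWithinAt_pi.1 hφ i)).congr_deriv ?_
    simp only [Derivation.leibniz, pderiv_X, Pi.single_apply, smul_eq_mul, mul_ite, mul_one,
      mul_zero, map_add, apply_ite (eval (φ t)), map_zero, map_mul, eval_X, add_mul, ite_mul,
      zero_mul, Finset.sum_mul, Finset.sum_add_distrib, Finset.sum_ite_eq, Finset.mem_univ,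
      if_true]
    rw [add_comm]
    exact congrArg₂ _ rfl (Finset.sum_congr rfl fun _ _ => by ring)

lemma exists_isSol (f : Fin n → MvPolynomial (Fin n) ℝ) (ω : Fin n → ℝ) :
    ∃ T > 0, ∃ φ, IsSol f T φ ∧ φ 0 = ω := by
  have hF : ContDiffAt ℝ 1 (fun x : Fin n → ℝ => fun j => eval x (f j)) ω :=
    (AnalyticAt.pi fun j => AnalyticOnNhd.eval_continuousLinearMap
      (ContinuousLinearMap.id ℝ (Fin n → ℝ)) (f j) ω trivial).contDiffAt
  obtain ⟨φ, hφ0, ε, hε, hφ⟩ := hF.exists_forall_mem_closedBall_exists_eq_forall_mem_Ioo_hasDerivAt₀ 0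
  refine ⟨ε / 2, by positivity, φ, fun t ht => (hφ t ⟨?_, ?_⟩).hasDerivWithinAt, hφ0⟩
  · linarith [ht.1]
  · linarith [ht.2]

lemma exists_first_neg_of_not_progGe {p : MvPolynomial (Fin n) ℝ} {N : ℕ} {ω : Fin n → ℝ}
    (h : ¬ProgGe f p N ω) :
    ∃ k < N, (∀ j < k, eval ω ((lieD f)^[j] p) = 0) ∧ eval ω ((lieD f)^[k] p) < 0 := by
  classical
  obtain ⟨hgt, hvan⟩ := not_or.1 h
  push Not at hvan
  obtain ⟨i, hi, hne⟩ := hvan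
  have hex : ∃ i, eval ω ((lieD f)^[i] p) ≠ 0 := ⟨i, hne⟩
  have hk : Nat.find hex < N := (Nat.find_min' hex hne).trans_lt hi
  have hprev : ∀ j < Nat.find hex, eval ω ((lieD f)^[j] p) = 0 :=
    fun j hj => not_not.1 (Nat.find_min hex hj)
  exact ⟨_, hk, hprev,
    lt_of_le_of_ne (not_lt.1 fun hpos => hgt ⟨_, hk, hprev, hpos⟩) (Nat.find_spec hex)⟩

namespace IsSol

variable {T : ℝ} {φ : ℝ → Fin n → ℝ}

lemma mono {T' : ℝ} (hφ : IsSol f T φ) (hT' : T' ≤ T) : IsSol f T' φ :=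
  fun t ht => (hφ t ⟨ht.1, ht.2.trans hT'⟩).mono (Icc_subset_Icc_right hT')

lemma continuousOn (hφ : IsSol f T φ) : ContinuousOn φ (Icc 0 T) :=
  fun t ht => (hφ t ht).continuousWithinAt

lemma hasDerivWithinAt_eval_iterate (hφ : IsSol f T φ) (r : MvPolynomial (Fin n) ℝ) (j : ℕ)
    {t : ℝ} (ht : t ∈ Icc 0 T) :
    HasDerivWithinAt (fun u => eval (φ u) ((lieD f)^[j] r))
      (eval (φ t) ((lieD f)^[j + 1] r)) (Icc 0 T) t := by
  simpa [Function.iterate_succ_apply', lieD, map_sum] using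
    (hφ t ht).eval_mvPolynomial ((lieD f)^[j] r)

variable {p : MvPolynomial (Fin n) ℝ} {N : ℕ}

lemma eval_iterate_lieD_eq_zero (hφ : IsSol f T φ) (hr : IsRank f p N)
    (h0 : ∀ i < N, eval (φ 0) ((lieD f)^[i] p) = 0) :
    ∀ t ∈ Icc 0 T, ∀ i < N, eval (φ t) ((lieD f)^[i] p) = 0 := by
  obtain ⟨-, g, hg⟩ := hr
  let u : ℝ → Fin N → ℝ := fun t j => eval (φ t) ((lieD f)^[j] p)
  let u' : ℝ → Fin N → ℝ := fun t j => eval (φ t) ((lieD f)^[j + 1] p)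
  have hu : ∀ t ∈ Icc 0 T, HasDerivWithinAt u (u' t) (Icc 0 T) t :=
    fun t ht => hasDerivWithinAt_pi.2 fun j => hφ.hasDerivWithinAt_eval_iterate p j ht
  obtain ⟨C, hC⟩ := isCompact_Icc.bddAbove_image <|
    (continuous_finsetSum (Finset.range N) fun i _ =>
      (continuous_eval (g i)).abs).comp_continuousOn hφ.continuousOn
  have hbound : ∀ t ∈ Icc 0 T, ‖u' t‖ ≤ max 1 C * ‖u t‖ := fun t ht =>
    (pi_norm_shift_le_of_eq_sum (a := fun i => eval (φ t) ((lieD f)^[i] p))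
      (c := fun i => eval (φ t) (g i)) (by simp [hg, map_sum])).trans <|
      mul_le_mul_of_nonneg_right (max_le_max le_rfl (hC (mem_image_of_mem _ ht))) (norm_nonneg _)
  have hzero := eq_zero_of_abs_deriv_le_mul_abs_self_of_eq_zero_right
    (fun t ht => (hu t ht).continuousWithinAt)
    (fun t ht => (hu t (Ico_subset_Icc_self ht)).mono_of_mem_nhdsWithin (Icc_mem_nhdsGE_of_mem ht))
    (funext fun j => h0 j j.2) (fun t ht => hbound t (Ico_subset_Icc_self ht))
  exact fun t ht i hi => congrFun (hzero t ht) ⟨i, hi⟩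

lemma eventually_pos (hφ : IsSol f T φ) (hT : 0 < T) {k : ℕ}
    (hzero : ∀ j < k, eval (φ 0) ((lieD f)^[j] p) = 0)
    (hpos : 0 < eval (φ 0) ((lieD f)^[k] p)) : ∀ᶠ t in 𝓝[>] 0, 0 < eval (φ t) p :=
  eventually_pos_of_hasDerivWithinAt_succ hT (Y := fun j t => eval (φ t) ((lieD f)^[j] p))
    (fun j _ ht => hφ.hasDerivWithinAt_eval_iterate p j ht) hzero hpos

lemma eventually_neg (hφ : IsSol f T φ) (hT : 0 < T) {k : ℕ}
    (hzero : ∀ j < k, eval (φ 0) ((lieD f)^[j] p) = 0)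
    (hneg : eval (φ 0) ((lieD f)^[k] p) < 0) : ∀ᶠ t in 𝓝[>] 0, eval (φ t) p < 0 := by
  simpa using eventually_pos_of_hasDerivWithinAt_succ hT
    (Y := fun j t => -eval (φ t) ((lieD f)^[j] p))
    (fun j _ ht => (hφ.hasDerivWithinAt_eval_iterate p j ht).neg)
    (fun j hj => by simp [hzero j hj]) (neg_pos.2 hneg)

lemma eventually_eq_zero (hφ : IsSol f T φ) (hT : 0 < T) (hr : IsRank f p N)
    (h0 : ∀ i < N, eval (φ 0) ((lieD f)^[i] p) = 0) : ∀ᶠ t in 𝓝[>] 0, eval (φ t) p = 0 := by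
  filter_upwards [Ioc_mem_nhdsGT hT] with t ht
  exact hφ.eval_iterate_lieD_eq_zero hr h0 t (Ioc_subset_Icc_self ht) 0 hr.1

lemma eventually_pos_of_progGt (hφ : IsSol f T φ) (hT : 0 < T) (h : ProgGt f p N (φ 0)) :
    ∀ᶠ t in 𝓝[>] 0, 0 < eval (φ t) p :=
  let ⟨_, _, hzero, hpos⟩ := h
  hφ.eventually_pos hT hzero hpos

lemma eventually_neg_of_not_progGe (hφ : IsSol f T φ) (hT : 0 < T) (h : ¬ProgGe f p N (φ 0)) :
    ∀ᶠ t in 𝓝[>] 0, eval (φ t) p < 0 :=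
  let ⟨_, _, hzero, hneg⟩ := exists_first_neg_of_not_progGe h
  hφ.eventually_neg hT hzero hneg

lemma eventually_nonneg_of_progGe (hφ : IsSol f T φ) (hT : 0 < T) (hr : IsRank f p N)
    (h : ProgGe f p N (φ 0)) : ∀ᶠ t in 𝓝[>] 0, 0 ≤ eval (φ t) p := by
  rcases h with h | h
  · exact (hφ.eventually_pos_of_progGt hT h).mono fun _ => le_of_lt
  · exact (hφ.eventually_eq_zero hT hr h).mono fun _ => Eq.ge

lemma eventually_nonpos_of_not_progGt (hφ : IsSol f T φ) (hT : 0 < T) (hr : IsRank f p N)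
    (h : ¬ProgGt f p N (φ 0)) : ∀ᶠ t in 𝓝[>] 0, eval (φ t) p ≤ 0 := by
  by_cases h0 : ∀ i < N, eval (φ 0) ((lieD f)^[i] p) = 0
  · exact (hφ.eventually_eq_zero hT hr h0).mono fun _ => Eq.le
  · exact (hφ.eventually_neg_of_not_progGe hT (not_or.2 ⟨h, h0⟩)).mono fun _ => le_of_lt

variable {m k : ℕ} {p q : ℕ → MvPolynomial (Fin n) ℝ} {Np Nq : ℕ → ℕ}

lemma eventually_nonneg_and_pos (hφ : IsSol f T φ) (hT : 0 < T)
    (hNp : ∀ j ≤ m, IsRank f (p j) (Np j)) (hp : ∀ j ≤ m, ProgGe f (p j) (Np j) (φ 0))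
    (hq : ∀ j ≤ k, ProgGt f (q j) (Nq j) (φ 0)) :
    ∀ᶠ t in 𝓝[>] 0, (∀ j ≤ m, 0 ≤ eval (φ t) (p j)) ∧ ∀ j ≤ k, 0 < eval (φ t) (q j) :=
  ((eventually_all_finite (finite_Iic m)).2 fun j hj =>
    hφ.eventually_nonneg_of_progGe hT (hNp j hj) (hp j hj)).and <|
  (eventually_all_finite (finite_Iic k)).2 fun j hj => hφ.eventually_pos_of_progGt hT (hq j hj)

lemma eventually_not_nonneg_and_pos (hφ : IsSol f T φ) (hT : 0 < T)
    (hNq : ∀ j ≤ k, IsRank f (q j) (Nq j))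
    (h : ¬((∀ j ≤ m, ProgGe f (p j) (Np j) (φ 0)) ∧ ∀ j ≤ k, ProgGt f (q j) (Nq j) (φ 0))) :
    ∀ᶠ t in 𝓝[>] 0, ¬((∀ j ≤ m, 0 ≤ eval (φ t) (p j)) ∧ ∀ j ≤ k, 0 < eval (φ t) (q j)) := by
  by_cases hge : ∀ j ≤ m, ProgGe f (p j) (Np j) (φ 0)
  · obtain ⟨j, hj, hgt⟩ : ∃ j ≤ k, ¬ProgGt f (q j) (Nq j) (φ 0) := by
      push Not at h
      exact h hge
    filter_upwards [hφ.eventually_nonpos_of_not_progGt hT (hNq j hj) hgt] with t ht hin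
    exact (hin.2 j hj).not_ge ht
  · obtain ⟨j, hj, hge⟩ : ∃ j ≤ m, ¬ProgGe f (p j) (Np j) (φ 0) := by simpa using hge
    filter_upwards [hφ.eventually_neg_of_not_progGe hT hge] with t ht hin
    exact (hin.1 j hj).not_gt ht

end IsSol

theorem LP_char_general {n : ℕ} (f : Fin n → MvPolynomial (Fin n) ℝ)
    (M : ℕ) (m k : ℕ → ℕ)
    (p q : ℕ → ℕ → MvPolynomial (Fin n) ℝ) (Np Nq : ℕ → ℕ → ℕ)
    (hNp : ∀ i ≤ M, ∀ j ≤ m i, IsRank f (p i j) (Np i j))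
    (hNq : ∀ i ≤ M, ∀ j ≤ k i, IsRank f (q i j) (Nq i j))
    (P : Set (Fin n → ℝ))
    (hP : P = {x | ∃ i ≤ M, (∀ j ≤ m i, 0 ≤ eval x (p i j)) ∧
        (∀ j ≤ k i, 0 < eval x (q i j))})
    (ω : Fin n → ℝ) :
    (∃ T : ℝ, 0 < T ∧ ∃ φ : ℝ → (Fin n → ℝ), IsSol f T φ ∧ φ 0 = ω ∧
        ∀ t ∈ Ioc (0 : ℝ) T, φ t ∈ P)
    ↔ (∃ i ≤ M, (∀ j ≤ m i, ProgGe f (p i j) (Np i j) ω) ∧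
        (∀ j ≤ k i, ProgGt f (q i j) (Nq i j) ω)) := by
  subst hP
  constructor
  · rintro ⟨T, hT, φ, hφ, rfl, hmem⟩
    by_contra hprog
    have hout := (eventually_all_finite (finite_Iic M)).2 fun i hi =>
      hφ.eventually_not_nonneg_and_pos hT (hNq i hi) fun h => hprog ⟨i, hi, h⟩
    have hIoc : ∀ᶠ t in 𝓝[>] 0, t ∈ Ioc 0 T := Ioc_mem_nhdsGT hT
    obtain ⟨t, ht, hout⟩ := (hIoc.and hout).exists
    obtain ⟨i, hi, hin⟩ := hmem t ht
    exact hout i hi hin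
  · rintro ⟨i, hi, hp, hq⟩
    obtain ⟨T, hT, φ, hφ, rfl⟩ := exists_isSol f ω
    obtain ⟨δ, hδ, hsub⟩ := mem_nhdsGT_iff_exists_Ioc_subset.1 <|
      hφ.eventually_nonneg_and_pos hT (hNp i hi) hp hq
    exact ⟨min δ T, lt_min hδ hT, φ, hφ.mono (min_le_right _ _), rfl,
      fun t ht => ⟨i, hi, hsub ⟨ht.1, ht.2.trans (min_le_left _ _)⟩⟩⟩

/-- Characterization of local progress for semialgebraic sets (LP). -/
theorem LP_char {n : ℕ} (hn : 1 ≤ n) (f : Fin n → MvPolynomial (Fin n) ℝ)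
    (M : ℕ) (m k : ℕ → ℕ)
    (p q : ℕ → ℕ → MvPolynomial (Fin n) ℝ) (Np Nq : ℕ → ℕ → ℕ)
    (hNp : ∀ i ≤ M, ∀ j ≤ m i, IsRank f (p i j) (Np i j))
    (hNq : ∀ i ≤ M, ∀ j ≤ k i, IsRank f (q i j) (Nq i j))
    (P : Set (Fin n → ℝ))
    (hP : P = {x | ∃ i ≤ M, (∀ j ≤ m i, 0 ≤ eval x (p i j)) ∧
        (∀ j ≤ k i, 0 < eval x (q i j))})
    (ω : Fin n → ℝ) :
    (∃ T : ℝ, 0 < T ∧ ∃ φ : ℝ → (Fin n → ℝ), IsSol f T φ ∧ φ 0 = ω ∧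
        ∀ t ∈ Ioc (0 : ℝ) T, φ t ∈ P)
    ↔ (∃ i ≤ M, (∀ j ≤ m i, ProgGe f (p i j) (Np i j) ω) ∧
        (∀ j ≤ k i, ProgGt f (q i j) (Nq i j) ω)) :=
  LP_char_general f M m k p q Np Nq hNp hNq P hP ω
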